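/- Let f, g ∈ L²₊(ℝ) (boundary values of Hardy space H² functions on the upper half-plane). Then the product f·g ∈ L¹(ℝ) has Fourier transform vanishing on (−∞, 0); i.e., ∫ f(x)g(x)e^{−iξx} dx = 0 for all ξ < 0. -/

import Mathlib

/-!
Put `H = e^{iξ·} ḡ`. Then `∫ f g e^{-iξx} dx = ⟪H, f⟫ = ⟪F H, F f⟫` by Parseval. For integrable `g`
the defining formula of `F` gives `F H (η) = conj (F g (ξ - η))`; both sides are isometric in `g`
(conjugation, a unimodular factor and a measure-preserving change of variables), so the identity
extends from the dense set `L¹ ∩ L²` to all of `L²`. Now `F f (η) = 0` for `η < 0` and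
`F g (ξ - η) = 0` for `η > ξ`, and since `ξ < 0` every `η` lies in one of these ranges, so the
integrand of `⟪F H, F f⟫` vanishes a.e.
-/

open MeasureTheory Complex Filter

/-- `F` is the Fourier–Plancherel transform on `L²(ℝ)`. -/
def IsFourierPlancherel
    (F : Lp ℂ 2 (volume : Measure ℝ) ≃ₗᵢ[ℂ] Lp ℂ 2 (volume : Measure ℝ)) : Prop :=
  ∀ g : Lp ℂ 2 (volume : Measure ℝ), Integrable (⇑g) volume →
    (⇑(F g)) =ᵐ[volume] fun ξ : ℝ =>
      ((Real.sqrt (2 * Real.pi) : ℂ))⁻¹ * ∫ t : ℝ, Complex.exp (-(Complex.I * ξ * t)) * g t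

open scoped ENNReal ComplexConjugate

namespace MeasureTheory

theorem Lp.dense_setOf_integrable {α E : Type*} [MeasurableSpace α] [NormedAddCommGroup E]
    {μ : Measure α} {p : ℝ≥0∞} [Fact (1 ≤ p)] (hp : p ≠ ∞) :
    Dense {g : Lp E p μ | Integrable g μ} := by
  refine (Lp.simpleFunc.dense hp).mono fun g hg => ?_
  let s : Lp.simpleFunc E p μ := ⟨g, hg⟩
  have hp0 : p ≠ 0 := (zero_lt_one.trans_le Fact.out).ne'
  exact ((SimpleFunc.memLp_iff_integrable hp0 hp).1 (Lp.simpleFunc.memLp s)).congr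
    (Lp.simpleFunc.toSimpleFunc_eq_toFun s)

end MeasureTheory

section ConjTwist

variable {α : Type*} {σ : α → α} {u : α → ℂ}

noncomputable def conjTwist (σ : α → α) (u : α → ℂ) (φ : α → ℂ) : α → ℂ :=
  fun t => u t * conj (φ (σ t))

theorem conjTwist_sub (φ ψ : α → ℂ) :
    conjTwist σ u (φ - ψ) = conjTwist σ u φ - conjTwist σ u ψ := by
  funext t; simp [conjTwist, mul_sub]

variable [MeasurableSpace α] {μ : Measure α} {p : ℝ≥0∞}

theorem eLpNorm_conjTwist (hσ : MeasurePreserving σ μ μ) (hu : ∀ t, ‖u t‖ = 1) {φ : α → ℂ}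
    (hφ : AEStronglyMeasurable φ μ) : eLpNorm (conjTwist σ u φ) p μ = eLpNorm φ p μ := by
  rw [← eLpNorm_comp_measurePreserving hφ hσ]
  exact eLpNorm_congr_norm_ae (Eventually.of_forall fun t => by simp [conjTwist, hu])

theorem MeasureTheory.MemLp.conjTwist (hσ : MeasurePreserving σ μ μ)
    (hu_meas : AEStronglyMeasurable u μ) (hu : ∀ t, ‖u t‖ = 1) {φ : α → ℂ} (hφ : MemLp φ p μ) :
    MemLp (conjTwist σ u φ) p μ :=
  ⟨hu_meas.mul (continuous_conj.comp_aestronglyMeasurable (hφ.1.comp_measurePreserving hσ)),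
    by rw [eLpNorm_conjTwist hσ hu hφ.1]; exact hφ.2⟩

namespace MeasureTheory.Lp

noncomputable def conjTwist (hσ : MeasurePreserving σ μ μ) (hu_meas : AEStronglyMeasurable u μ)
    (hu : ∀ t, ‖u t‖ = 1) (g : Lp ℂ p μ) : Lp ℂ p μ :=
  ((Lp.memLp g).conjTwist hσ hu_meas hu).toLp

variable (hσ : MeasurePreserving σ μ μ) (hu_meas : AEStronglyMeasurable u μ) (hu : ∀ t, ‖u t‖ = 1)

theorem coeFn_conjTwist (g : Lp ℂ p μ) :
    ⇑(Lp.conjTwist hσ hu_meas hu g) =ᵐ[μ] _root_.conjTwist σ u g :=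
  MemLp.coeFn_toLp _

theorem isometry_conjTwist [Fact (1 ≤ p)] :
    Isometry (Lp.conjTwist (p := p) hσ hu_meas hu) := fun g h => by
  rw [Lp.conjTwist, Lp.conjTwist, Lp.edist_toLp_toLp, Lp.edist_def, ← conjTwist_sub,
    eLpNorm_conjTwist hσ hu ((Lp.aestronglyMeasurable g).sub (Lp.aestronglyMeasurable h))]

end MeasureTheory.Lp

end ConjTwist

section Fourier

theorem norm_exp_I_mul_ofReal_mul_ofReal (ξ t : ℝ) : ‖exp (I * ξ * t)‖ = 1 := by
  rw [norm_exp]; simp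

theorem continuous_exp_I_mul_ofReal_mul_ofReal (ξ : ℝ) :
    Continuous fun t : ℝ => exp (I * ξ * t) := by
  fun_prop

noncomputable def modulatedConj (ξ : ℝ) :
    Lp ℂ 2 (volume : Measure ℝ) → Lp ℂ 2 (volume : Measure ℝ) :=
  Lp.conjTwist (MeasurePreserving.id volume)
    (continuous_exp_I_mul_ofReal_mul_ofReal ξ).aestronglyMeasurable
    (norm_exp_I_mul_ofReal_mul_ofReal ξ)

noncomputable def reflectedConj (ξ : ℝ) :
    Lp ℂ 2 (volume : Measure ℝ) → Lp ℂ 2 (volume : Measure ℝ) :=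
  Lp.conjTwist (Measure.measurePreserving_sub_left volume ξ) aestronglyMeasurable_const
    fun _ => norm_one

theorem coeFn_modulatedConj (ξ : ℝ) (g : Lp ℂ 2 (volume : Measure ℝ)) :
    ⇑(modulatedConj ξ g) =ᵐ[volume] fun t => exp (I * ξ * t) * conj (g t) :=
  Lp.coeFn_conjTwist _ _ _ g

theorem coeFn_reflectedConj (ξ : ℝ) (g : Lp ℂ 2 (volume : Measure ℝ)) :
    ⇑(reflectedConj ξ g) =ᵐ[volume] fun η => conj (g (ξ - η)) :=
  (Lp.coeFn_conjTwist (Measure.measurePreserving_sub_left volume ξ) aestronglyMeasurable_const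
    (fun _ => norm_one) g).mono fun _ h => h.trans (one_mul _)

theorem continuous_modulatedConj (ξ : ℝ) : Continuous (modulatedConj ξ) :=
  (Lp.isometry_conjTwist _ _ _).continuous

theorem continuous_reflectedConj (ξ : ℝ) : Continuous (reflectedConj ξ) :=
  (Lp.isometry_conjTwist _ _ _).continuous

variable {F : Lp ℂ 2 (volume : Measure ℝ) ≃ₗᵢ[ℂ] Lp ℂ 2 (volume : Measure ℝ)}

theorem IsFourierPlancherel.apply_modulatedConj_of_integrable (hF : IsFourierPlancherel F)
    (ξ : ℝ) {g : Lp ℂ 2 (volume : Measure ℝ)} (hg : Integrable g) :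
    F (modulatedConj ξ g) = reflectedConj ξ (F g) := by
  have hH : Integrable (modulatedConj ξ g) := by
    refine (memLp_one_iff_integrable.1 ?_).congr (coeFn_modulatedConj ξ g).symm
    exact (memLp_one_iff_integrable.2 hg).conjTwist (MeasurePreserving.id volume)
      (continuous_exp_I_mul_ofReal_mul_ofReal ξ).aestronglyMeasurable
      (norm_exp_I_mul_ofReal_mul_ofReal ξ)
  have hFg := (Measure.measurePreserving_sub_left volume ξ).quasiMeasurePreserving.ae (hF g hg)
  refine Lp.ext ?_
  filter_upwards [hF _ hH, hFg, coeFn_reflectedConj ξ (F g)] with η hFH hFg hW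
  rw [hFH, hW, hFg, map_mul, ← integral_conj, map_inv₀, conj_ofReal]
  congr 1
  refine integral_congr_ae ((coeFn_modulatedConj ξ g).mono fun t ht => ?_)
  dsimp only at ht ⊢
  rw [ht, map_mul, ← exp_conj, ← mul_assoc, ← exp_add]
  congr 2
  simp only [map_neg, map_mul, conj_I, conj_ofReal]
  push_cast
  ring

theorem IsFourierPlancherel.apply_modulatedConj (hF : IsFourierPlancherel F) (ξ : ℝ)
    (g : Lp ℂ 2 (volume : Measure ℝ)) : F (modulatedConj ξ g) = reflectedConj ξ (F g) :=
  congrFun ((F.continuous.comp (continuous_modulatedConj ξ)).ext_on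
    (Lp.dense_setOf_integrable (by norm_num)) ((continuous_reflectedConj ξ).comp F.continuous)
    fun _ hh => hF.apply_modulatedConj_of_integrable ξ hh) g

theorem inner_modulatedConj (ξ : ℝ) (f g : Lp ℂ 2 (volume : Measure ℝ)) :
    inner ℂ (modulatedConj ξ g) f = ∫ x : ℝ, f x * g x * exp (-(I * ξ * x)) := by
  rw [L2.inner_def]
  refine integral_congr_ae ((coeFn_modulatedConj ξ g).mono fun x hx => ?_)
  dsimp only at hx ⊢
  rw [RCLike.inner_apply, hx, map_mul, conj_conj, ← exp_conj]
  simp only [map_mul, conj_I, conj_ofReal]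
  ring_nf

end Fourier

/-- If `f, g ∈ L²₊(ℝ)` (Hardy space boundary values), then `f·g ∈ L¹(ℝ)` and its
classical Fourier transform vanishes on `(-∞,0)`:
`∫ f(x) g(x) e^{-iξx} dx = 0` for every `ξ < 0`. -/
theorem product_of_hardy_functions
    (F : Lp ℂ 2 (volume : Measure ℝ) ≃ₗᵢ[ℂ] Lp ℂ 2 (volume : Measure ℝ))
    (hF : IsFourierPlancherel F)
    (f g : Lp ℂ 2 (volume : Measure ℝ))
    (hf : ∀ᵐ ξ ∂(volume : Measure ℝ), ξ < 0 → (F f) ξ = 0)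
    (hg : ∀ᵐ ξ ∂(volume : Measure ℝ), ξ < 0 → (F g) ξ = 0) :
    Integrable (fun x : ℝ => f x * g x) volume ∧
      ∀ ξ : ℝ, ξ < 0 →
        ∫ x : ℝ, f x * g x * Complex.exp (-(Complex.I * ξ * x)) = 0 := by
  refine ⟨(Lp.memLp f).integrable_mul (Lp.memLp g), fun ξ hξ => ?_⟩
  have hg' := (Measure.measurePreserving_sub_left volume ξ).quasiMeasurePreserving.ae hg
  rw [← inner_modulatedConj, ← F.inner_map_map, hF.apply_modulatedConj, L2.inner_def]
  refine integral_eq_zero_of_ae ?_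
  filter_upwards [coeFn_reflectedConj ξ (F g), hf, hg'] with η hW hFf hFg
  rw [RCLike.inner_apply, hW]
  rcases lt_or_ge η 0 with hη | hη
  · rw [hFf hη, zero_mul, Pi.zero_apply]
  · rw [hFg (by linarith), map_zero, map_zero, mul_zero, Pi.zero_apply]
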